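/- Let X be a Banach space, k ≥ 1, and let u : ℝ → X be (k+1)-times continuously differentiable on an interval [t − kτ, t] with τ > 0. Then the BDF defect d := (1/τ) Σ_{j=0}^k δ_j u(t − jτ) − u'(t) admits the exact representation d = (1/k!) [ (1/τ) Σ_{j=0}^k δ_j ∫_{t−kτ}^{t−jτ} (t − jτ − s)^k u^{(k+1)}(s) ds − k ∫_{t−kτ}^{t} (t − s)^{k−1} u^{(k+1)}(s) ds ], where the integrals are X-valued Bochner integrals. -/

import Mathlib

/-!
Expand `u (t - jτ)` and `u' t` by Taylor's formula with integral remainder about `t - kτ`, to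
orders `k` and `k - 1`. The BDF difference quotient is exact on polynomials of degree `≤ k`, so the
Taylor polynomials cancel and only the remainders survive.

Exactness comes from `ζ δ'(ζ) = (1 - ζ)^k - 1`, i.e. `j δ_j = (-1)^j C(k, j)` for `j ≥ 1`, together
with `∑ δ_j = δ(1) = 0`. Writing `q(x) = q(0) + x r(x)` with `deg r < k`, this gives
`∑ δ_j q(j) = ∑_{j ≥ 1} (-1)^j C(k, j) r(j) = -r(0) = -q'(0)`, since the `k`-th forward difference
of `r` vanishes.
-/

open Set

section Taylor

open Finset

variable {E : Type*} [NormedAddCommGroup E] [NormedSpace ℝ E] [CompleteSpace E]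

theorem integral_sub_pow_smul_eq {w w' : ℝ → E} {a x : ℝ} (hax : a ≤ x)
    (hw : ∀ s ∈ Icc a x, HasDerivWithinAt w (w' s) (Icc a x) s)
    (hw' : ContinuousOn w' (Icc a x)) (n : ℕ) :
    ((n : ℝ) + 1) • ∫ s in a..x, (x - s) ^ n • w s
      = (x - a) ^ (n + 1) • w a + ∫ s in a..x, (x - s) ^ (n + 1) • w' s := by
  have hpow : ∀ s ∈ Icc a x, HasDerivWithinAt (fun s => (x - s) ^ (n + 1))
      (-(((n : ℝ) + 1) * (x - s) ^ n)) (Icc a x) s := fun s _ => by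
    have := ((hasDerivAt_id s).const_sub x).pow (n + 1)
    simp only [id, Nat.add_sub_cancel, Nat.cast_add, Nat.cast_one] at this
    exact (this.congr_deriv (by ring)).hasDerivWithinAt
  have h := intervalIntegral.integral_smul_deriv_eq_deriv_smul_of_hasDerivWithinAt
    (uIcc_of_le hax ▸ hpow) (uIcc_of_le hax ▸ hw)
    (Continuous.intervalIntegrable (by fun_prop) a x)
    ((hw'.mono (uIcc_of_le hax).subset).intervalIntegrable)
  simp only [sub_self, zero_pow (Nat.succ_ne_zero n), zero_smul, zero_sub, neg_smul,
    intervalIntegral.integral_neg, mul_smul, intervalIntegral.integral_smul] at h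
  rw [h]
  abel

theorem taylor_integral_remainder_of_hasDerivWithinAt {v : ℕ → ℝ → E} {a b : ℝ} {n : ℕ}
    (hd : ∀ m < n + 1, ∀ s ∈ Icc a b, HasDerivWithinAt (v m) (v (m + 1) s) (Icc a b) s)
    (hc : ContinuousOn (v (n + 1)) (Icc a b)) {x : ℝ} (hx : x ∈ Icc a b) :
    v 0 x = ∑ m ∈ range (n + 1), ((x - a) ^ m / m.factorial) • v m a
      + (n.factorial : ℝ)⁻¹ • ∫ s in a..x, (x - s) ^ n • v (n + 1) s := by
  have hsub : Icc a x ⊆ Icc a b := Icc_subset_Icc_right hx.2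
  induction n with
  | zero =>
    have hcont : ContinuousOn (v 0) (Icc a x) := fun s hs =>
      (hd 0 Nat.one_pos s (hsub hs)).continuousWithinAt.mono hsub
    have hftc := intervalIntegral.integral_eq_sub_of_hasDerivAt_of_le hx.1 hcont
      (fun s hs => ((hd 0 Nat.one_pos s (hsub (Ioo_subset_Icc_self hs))).mono hsub).hasDerivAt
        (Icc_mem_nhds hs.1 hs.2))
      ((hc.mono hsub).intervalIntegrable_of_Icc hx.1)
    simp [hftc]
  | succ n ih =>
    have hc' : ContinuousOn (v (n + 1)) (Icc a b) := fun s hs =>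
      (hd (n + 1) (by omega) s hs).continuousWithinAt
    have hibp := integral_sub_pow_smul_eq hx.1
      (fun s hs => (hd (n + 1) (by omega) s (hsub hs)).mono hsub) (hc.mono hsub) n
    rw [ih (fun m hm => hd m (by omega)) hc', sum_range_succ _ (n + 1), add_assoc,
      ← inv_smul_smul₀ (by positivity : (n : ℝ) + 1 ≠ 0) (∫ s in a..x, _), hibp]
    simp only [Nat.factorial_succ, Nat.cast_mul, Nat.cast_succ, mul_inv, div_eq_mul_inv]
    module

end Taylor

section BDFCoefficients

open Finset Polynomial

theorem coeff_one_sub_X_pow {R : Type*} [CommRing R] (k j : ℕ) :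
    ((1 - X : R[X]) ^ k).coeff j = (-1) ^ j * k.choose j := by
  have hterm : ∀ m ∈ range (k + 1), (-X : R[X]) ^ m * 1 ^ (k - m) * (k.choose m : R[X])
      = C ((-1 : R) ^ m * k.choose m) * X ^ m := by
    intro m _
    rw [neg_pow, one_pow, mul_one, C_mul, C_pow, C_neg, C_1, ← C_eq_natCast]
    ring
  rw [sub_eq_neg_add, add_pow, sum_congr rfl hterm, finsetSum_coeff]
  simp only [coeff_C_mul_X_pow]
  rw [sum_ite_eq]
  split_ifs with h
  · rfl
  · rw [Nat.choose_eq_zero_of_lt (by simpa using h)]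
    simp

theorem X_mul_sum_Icc_one_sub_X_pow_pred {R : Type*} [CommRing R] (k : ℕ) :
    X * ∑ ℓ ∈ Finset.Icc 1 k, (1 - X : R[X]) ^ (ℓ - 1) = 1 - (1 - X) ^ k := by
  rw [← Finset.Ico_add_one_right_eq_Icc, sum_Ico_eq_sum_range]
  simp only [Nat.add_sub_cancel, add_tsub_cancel_left]
  rw [← geom_sum_mul_neg, sub_sub_cancel, mul_comm]

theorem sum_neg_one_pow_mul_choose_mul_eval_eq_zero {R : Type*} [CommRing R] {n : ℕ}
    (r : R[X]) (hr : r.natDegree < n) :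
    ∑ j ∈ range (n + 1), (-1 : R) ^ j * n.choose j * r.eval (j : R) = 0 := by
  have h := congr_fun (fwdDiff_iter_eq_zero_of_degree_lt hr) 0
  rw [fwdDiff_iter_eq_sum_shift] at h
  calc _ = (-1 : R) ^ n * ∑ j ∈ range (n + 1),
        ((-1 : ℤ) ^ (n - j) * n.choose j) • r.eval (0 + j • (1 : R)) := by
        rw [mul_sum]
        refine sum_congr rfl fun j hj => ?_
        obtain ⟨i, rfl⟩ := Nat.exists_eq_add_of_le (mem_range_succ_iff.mp hj)
        have hsq : (-1 : R) ^ i * (-1) ^ i = 1 := by rw [← mul_pow]; simp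
        simp only [zsmul_eq_mul, nsmul_eq_mul, mul_one, zero_add, Nat.add_sub_cancel_left]
        push_cast
        linear_combination (-(-1 : R) ^ j * (j + i).choose j * r.eval (j : R)) * hsq
    _ = 0 := by rw [h, Pi.zero_apply, mul_zero]

def IsBDFCoeffs (k : ℕ) (δc : ℕ → ℝ) : Prop :=
  ∀ ζ : ℂ, ∑ j ∈ range (k + 1), (δc j : ℂ) * ζ ^ j
    = ∑ ℓ ∈ Finset.Icc 1 k, ((ℓ : ℂ))⁻¹ * (1 - ζ) ^ ℓ

namespace IsBDFCoeffs

variable {k : ℕ} {δc : ℕ → ℝ}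

theorem sum_eq_zero (hδ : IsBDFCoeffs k δc) : ∑ j ∈ range (k + 1), δc j = 0 := by
  have h := hδ 1
  simp only [one_pow, mul_one, sub_self] at h
  rw [Finset.sum_eq_zero (s := Finset.Icc 1 k) fun ℓ hℓ => by
    rw [zero_pow (Nat.one_le_iff_ne_zero.mp (Finset.mem_Icc.mp hℓ).1), mul_zero]] at h
  exact_mod_cast h

theorem polynomial_eq (hδ : IsBDFCoeffs k δc) :
    ∑ j ∈ range (k + 1), C (δc j) * X ^ j
      = ∑ ℓ ∈ Finset.Icc 1 k, C (ℓ : ℝ)⁻¹ * (1 - X) ^ ℓ := by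
  refine Polynomial.funext fun x => Complex.ofReal_injective ?_
  simp only [eval_finsetSum, eval_mul, eval_C, eval_pow, eval_X, eval_sub, eval_one]
  push_cast
  exact hδ x

theorem X_mul_derivative (hδ : IsBDFCoeffs k δc) :
    X * derivative (∑ j ∈ range (k + 1), C (δc j) * X ^ j) = (1 - X) ^ k - 1 := by
  have hterm : ∀ ℓ ∈ Finset.Icc 1 k,
      derivative (C (ℓ : ℝ)⁻¹ * (1 - X) ^ ℓ) = -(1 - X) ^ (ℓ - 1) := by
    intro ℓ hℓ
    have hℓ0 : (ℓ : ℝ) ≠ 0 := by exact_mod_cast Nat.one_le_iff_ne_zero.mp (Finset.mem_Icc.mp hℓ).1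
    rw [derivative_C_mul, derivative_pow, derivative_sub, derivative_one, derivative_X,
      ← mul_assoc, ← mul_assoc, ← C_mul, inv_mul_cancel₀ hℓ0, C_1]
    ring
  rw [hδ.polynomial_eq, derivative_sum, sum_congr rfl hterm, sum_neg_distrib, mul_neg,
    X_mul_sum_Icc_one_sub_X_pow_pred]
  ring

theorem natCast_mul_eq_neg_one_pow_mul_choose (hδ : IsBDFCoeffs k δc) {j : ℕ} (hj1 : 1 ≤ j) (hjk : j ≤ k) :
    (j : ℝ) * δc j = (-1) ^ j * k.choose j := by
  obtain ⟨i, rfl⟩ := Nat.exists_eq_add_of_le' hj1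
  have h := congr_arg (coeff · (i + 1)) hδ.X_mul_derivative
  simp only [coeff_X_mul, coeff_derivative, finsetSum_coeff, coeff_C_mul_X_pow, coeff_sub,
    coeff_one_sub_X_pow, coeff_one, sum_ite_eq, mem_range_succ_iff.mpr hjk] at h
  simpa [mul_comm] using h

theorem sum_mul_eval_eq_neg_derivative_eval_zero (hδ : IsBDFCoeffs k δc) (hk : 1 ≤ k) (q : ℝ[X]) (hq : q.natDegree ≤ k) :
    ∑ j ∈ range (k + 1), δc j * q.eval (j : ℝ) = -(derivative q).eval 0 := by
  have hq_eval : ∀ x, q.eval x = x * q.divX.eval x + q.eval 0 := fun x => by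
    conv_lhs => rw [← divX_mul_X_add q]
    simp [coeff_zero_eq_eval_zero, mul_comm]
  have hdivX_deg : q.divX.natDegree < k := by
    rw [natDegree_divX_eq_natDegree_tsub_one]; omega
  have hdivX_zero : q.divX.eval 0 = (derivative q).eval 0 := by
    rw [← coeff_zero_eq_eval_zero, ← coeff_zero_eq_eval_zero, coeff_divX, coeff_derivative]
    simp
  calc ∑ j ∈ range (k + 1), δc j * q.eval (j : ℝ)
      = ∑ j ∈ range (k + 1), ((j : ℝ) * δc j) * q.divX.eval (j : ℝ)
          + (∑ j ∈ range (k + 1), δc j) * q.eval 0 := by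
        rw [sum_mul, ← sum_add_distrib]
        exact sum_congr rfl fun j _ => by rw [hq_eval]; ring
    _ = ∑ j ∈ range k, (-1) ^ (j + 1) * k.choose (j + 1) * q.divX.eval ((j + 1 : ℕ) : ℝ) := by
        rw [hδ.sum_eq_zero, zero_mul, add_zero, sum_range_succ']
        simp only [Nat.cast_zero, zero_mul, add_zero]
        refine sum_congr rfl fun j hj => ?_
        rw [hδ.natCast_mul_eq_neg_one_pow_mul_choose (Nat.le_add_left 1 j) (mem_range.mp hj)]
    _ = -(derivative q).eval 0 := by
        have h := sum_neg_one_pow_mul_choose_mul_eval_eq_zero q.divX hdivX_deg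
        rw [sum_range_succ'] at h
        simp only [pow_zero, Nat.choose_zero_right, Nat.cast_zero, Nat.cast_one, one_mul] at h
        linear_combination h - hdivX_zero

theorem sum_mul_sub_mul_pow_eq (hδ : IsBDFCoeffs k δc) (hk : 1 ≤ k) {m : ℕ} (hm : m ≤ k)
    (y τ : ℝ) : ∑ j ∈ range (k + 1), δc j * (y - j * τ) ^ m = m * τ * y ^ (m - 1) := by
  have hdeg : ((C y - C τ * X) ^ m).natDegree ≤ k := by
    refine (natDegree_pow_le_of_le m ?_).trans (by rw [mul_one]; exact hm)
    compute_degree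
  have h := hδ.sum_mul_eval_eq_neg_derivative_eval_zero hk _ hdeg
  simp only [eval_pow, eval_sub, eval_mul, eval_C, eval_X, derivative_pow, derivative_sub,
    derivative_mul, derivative_C, derivative_X, zero_mul, zero_add, zero_sub, mul_one, mul_zero,
    sub_zero, eval_neg] at h
  rw [sum_congr rfl fun j _ => by rw [mul_comm (j : ℝ) τ], h]
  ring

theorem one_div_smul_sum_smul_taylor_sum (hδ : IsBDFCoeffs k δc) (hk : 1 ≤ k)
    {E : Type*} [AddCommGroup E] [Module ℝ E] {τ : ℝ} (hτ : τ ≠ 0) (a t : ℝ) (w : ℕ → E) :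
    (1 / τ) • ∑ j ∈ range (k + 1), δc j • ∑ m ∈ range (k + 1),
        ((t - j * τ - a) ^ m / m.factorial) • w m
      = ∑ m ∈ range k, ((t - a) ^ m / m.factorial) • w (m + 1) := by
  have hcoeff : ∀ m ∈ range (k + 1),
      (1 / τ) * ∑ j ∈ range (k + 1), δc j * ((t - j * τ - a) ^ m / m.factorial)
        = m * (t - a) ^ (m - 1) / m.factorial := by
    intro m hm
    simp_rw [← mul_div_assoc, ← sum_div, sub_right_comm t _ a,
      hδ.sum_mul_sub_mul_pow_eq hk (mem_range_succ_iff.mp hm)]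
    field_simp
  calc _ = ∑ m ∈ range (k + 1),
        ((1 / τ) * ∑ j ∈ range (k + 1), δc j * ((t - j * τ - a) ^ m / m.factorial)) • w m := by
        simp only [smul_sum, smul_smul, sum_smul, mul_sum]
        exact sum_comm
    _ = ∑ m ∈ range (k + 1), (m * (t - a) ^ (m - 1) / m.factorial) • w m :=
        sum_congr rfl fun m hm => by rw [hcoeff m hm]
    _ = _ := by
        rw [sum_range_succ']
        simp only [Nat.cast_zero, zero_mul, zero_div, zero_smul, add_zero, Nat.add_sub_cancel,
          Nat.factorial_succ, Nat.cast_mul]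
        refine sum_congr rfl fun m _ => ?_
        field_simp

end IsBDFCoeffs

end BDFCoefficients

/-- **Exact Peano-kernel representation of the BDF consistency defect.**
If `u : ℝ → X` is `(k+1)`-times continuously differentiable on `[t-kτ, t]`
(with `u m` denoting the `m`-th derivative of `u 0`), then the BDF defect
`d = (1/τ) ∑_{j=0}^k δ_j u(t-jτ) - u'(t)` equals
`(1/k!) [ (1/τ) ∑_{j=0}^k δ_j ∫_{t-kτ}^{t-jτ} (t-jτ-s)^k u^{(k+1)}(s) ds
          - k ∫_{t-kτ}^{t} (t-s)^{k-1} u^{(k+1)}(s) ds ]`. -/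
theorem bdf_defect_representation (k : ℕ) (hk : 1 ≤ k)
    (δc : ℕ → ℝ)
    (hδ : ∀ ζ : ℂ, ∑ j ∈ Finset.range (k + 1), (δc j : ℂ) * ζ ^ j
        = ∑ ℓ ∈ Finset.Icc 1 k, ((ℓ : ℂ))⁻¹ * (1 - ζ) ^ ℓ)
    (X : Type*) [NormedAddCommGroup X] [NormedSpace ℝ X] [CompleteSpace X]
    (t τ : ℝ) (hτ : 0 < τ)
    (u : ℕ → ℝ → X)
    (hderiv : ∀ m < k + 1, ∀ s ∈ Icc (t - k * τ) t,
      HasDerivWithinAt (u m) (u (m + 1) s) (Icc (t - k * τ) t) s)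
    (hcont : ContinuousOn (u (k + 1)) (Icc (t - k * τ) t)) :
    (1 / τ) • ∑ j ∈ Finset.range (k + 1), δc j • u 0 (t - j * τ) - u 1 t
    = ((k.factorial : ℝ))⁻¹ •
        ((1 / τ) • ∑ j ∈ Finset.range (k + 1),
            δc j • (∫ s in (t - k * τ)..(t - j * τ), (t - j * τ - s) ^ k • u (k + 1) s)
          - (k : ℝ) • ∫ s in (t - k * τ)..t, (t - s) ^ (k - 1) • u (k + 1) s) := by
  obtain ⟨n, rfl⟩ : ∃ n, k = n + 1 := ⟨k - 1, by omega⟩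
  have hmem : ∀ j ∈ Finset.range (n + 1 + 1), t - j * τ ∈ Icc (t - ↑(n + 1) * τ) t := by
    intro j hj
    have hj' : (j : ℝ) ≤ ↑(n + 1) := by exact_mod_cast Finset.mem_range_succ_iff.mp hj
    constructor <;> nlinarith
  have hu0 : ∀ j ∈ Finset.range (n + 1 + 1), u 0 (t - j * τ) = _ := fun j hj =>
    taylor_integral_remainder_of_hasDerivWithinAt hderiv hcont (hmem j hj)
  have hu1 := taylor_integral_remainder_of_hasDerivWithinAt (v := fun m => u (m + 1))
    (fun m hm => hderiv (m + 1) (by omega)) hcont (hmem 0 (by simp))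
  simp only [Nat.cast_zero, zero_mul, sub_zero, Nat.add_sub_cancel] at hu1 ⊢
  rw [Finset.sum_congr rfl fun j hj => by rw [hu0 j hj], hu1]
  simp only [smul_add, Finset.sum_add_distrib]
  rw [IsBDFCoeffs.one_div_smul_sum_smul_taylor_sum hδ (by omega) hτ.ne']
  have hfac : ((n + 1).factorial : ℝ)⁻¹ * ((n + 1 : ℕ) : ℝ) = (n.factorial : ℝ)⁻¹ := by
    rw [Nat.factorial_succ]
    push_cast
    field_simp
  rw [add_sub_add_left_eq_sub, smul_sub, smul_smul _ ((n + 1 : ℕ) : ℝ), hfac]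
  congr 1
  simp only [Finset.smul_sum, smul_smul]
  exact Finset.sum_congr rfl fun j _ => by ring_nf
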